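/- Let m₁,...,m_s be positive integers with ∑ᵢmᵢ² = β̄_{g+1}, and let k be a positive integer with d_k = ⌊k√β̄_{g+1}⌋. If (d_k+1)(d_k+2)/2 - ∑ᵢ kmᵢ(kmᵢ+1)/2 ≥ 1 then (d_k+1)(d_k+2)/2 - ∑ᵢ kmᵢ(kmᵢ+1)/2 ≤ (1/2)(3k√β̄_{g+1} - k∑ᵢmᵢ + 2), and consequently 3√β̄_{g+1} - ∑ᵢmᵢ ≥ 0. -/
import Mathlib


/-- Arithmetic core of the proof that Conjecture 4.2 implies Conjecture 4.3. -/
theorem stmt6 (s : ℕ) (m : Fin s → ℕ) (hm : ∀ i, 0 < m i)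
    (β : ℝ) (hβ : β = ∑ i, (m i : ℝ) ^ 2)
    (k : ℕ) (hk : 0 < k) (d : ℕ) (hd : d = ⌊(k : ℝ) * Real.sqrt β⌋₊)
    (h : ((d : ℝ) + 1) * ((d : ℝ) + 2) / 2 -
        (∑ i, ((k : ℝ) * m i) * ((k : ℝ) * m i + 1) / 2) ≥ 1) :
    ((d : ℝ) + 1) * ((d : ℝ) + 2) / 2 -
        (∑ i, ((k : ℝ) * m i) * ((k : ℝ) * m i + 1) / 2) ≤
      (1 / 2) * (3 * k * Real.sqrt β - k * (∑ i, (m i : ℝ)) + 2) ∧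
      3 * Real.sqrt β - (∑ i, (m i : ℝ)) ≥ 0 := by
  have hβ0 : (0:ℝ) ≤ β := by rw [hβ]; positivity
  have hs : (0:ℝ) ≤ Real.sqrt β := Real.sqrt_nonneg _
  have hdle : (d:ℝ) ≤ (k:ℝ) * Real.sqrt β := by
    rw [hd]; exact Nat.floor_le (by positivity)
  have hsq : Real.sqrt β ^ 2 = β := Real.sq_sqrt hβ0
  have hsum : ∑ i, ((k : ℝ) * m i) * ((k : ℝ) * m i + 1) / 2
      = ((k:ℝ)^2 * β + k * ∑ i, (m i : ℝ)) / 2 := by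
    rw [hβ, Finset.mul_sum, Finset.mul_sum, ← Finset.sum_add_distrib, ← Finset.sum_div]
    congr 1
    exact Finset.sum_congr rfl fun i _ => by ring
  have hd0 : (0:ℝ) ≤ (d:ℝ) := Nat.cast_nonneg d
  have h1 : ((d : ℝ) + 1) * ((d : ℝ) + 2) / 2 -
        (∑ i, ((k : ℝ) * m i) * ((k : ℝ) * m i + 1) / 2) ≤
      (1 / 2) * (3 * k * Real.sqrt β - k * (∑ i, (m i : ℝ)) + 2) := by
    rw [hsum]
    nlinarith [mul_le_mul hdle hdle hd0 (by positivity : (0:ℝ) ≤ (k:ℝ) * Real.sqrt β), hsq]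
  refine ⟨h1, ?_⟩
  have hk1 : (1:ℝ) ≤ (k:ℝ) := by exact_mod_cast hk
  nlinarith [h.trans h1, mul_nonneg (sub_nonneg.mpr hk1)
    (sub_nonneg.mpr (by nlinarith [h.trans h1] : (k:ℝ) * (∑ i, (m i : ℝ)) ≤ 3 * k * Real.sqrt β))]
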